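/- Let X be a straight metric space and suppose X = C₁ ∪ ... ∪ Cₙ is a cover of X by finitely many closed sets. Then a continuous function f : X → ℝ is uniformly continuous if and only if each restriction f|_{Cₖ} (k = 1, ..., n) is uniformly continuous. -/

import Mathlib

/-!
In a straight space every closed cover `A ∪ B` is U-placed: otherwise the function that vanishes
on `B` and equals `infDist · (A ∩ B)` on `A` would be continuous and uniformly continuous on both
pieces without being uniformly continuous.

For a finite closed cover, take an ultrafilter of pairs `(x, y)` of ever closer points, and let
`T` be the set of pieces `C i` such that `(x, f x)` approaches the graph of `f` over `C i`.
U-placedness of `⋃ T` and `⋃ Tᶜ` yields points of some piece outside `T` near `x`, which the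
uniform continuity of `f` on a piece of `T` turns into points of its graph near `(x, f x)`. So `T`
cannot be left: it contains a piece holding `y`, and then `f x` and `f y` are close.
-/

/-- A metric space is straight if for every cover by two closed sets, every continuous
real-valued function whose restrictions to both sets are uniformly continuous is
itself uniformly continuous. -/
def IsStraight (X : Type*) [MetricSpace X] : Prop :=
  ∀ F₁ F₂ : Set X, IsClosed F₁ → IsClosed F₂ → F₁ ∪ F₂ = Set.univ →
    ∀ f : X → ℝ, Continuous f → UniformContinuousOn f F₁ → UniformContinuousOn f F₂ →
      UniformContinuous f

open Filter Metric Set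

section Approaches

variable {α P : Type*} [PseudoMetricSpace P] {l : Filter α} {u : α → P} {D E : Set P}

def Approaches (l : Filter α) (u : α → P) (D : Set P) : Prop :=
  ∀ ε > 0, ∀ᶠ a in l, u a ∈ thickening ε D

theorem approaches_of_eventually_mem (h : ∀ᶠ a in l, u a ∈ D) : Approaches l u D :=
  fun _ hε => h.mono fun _ ha => self_subset_thickening hε D ha

theorem not_approaches_empty [l.NeBot] : ¬Approaches l u ∅ := fun h => by
  obtain ⟨a, ha⟩ := (h 1 one_pos).exists
  simp [thickening_empty] at ha

theorem Approaches.union {𝓕 : Ultrafilter α} (h : Approaches 𝓕 u (D ∪ E)) :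
    Approaches 𝓕 u D ∨ Approaches 𝓕 u E := by
  by_contra! hne
  simp only [Approaches, not_forall, ← Ultrafilter.eventually_not] at hne
  obtain ⟨⟨ε₁, hε₁, h₁⟩, ⟨ε₂, hε₂, h₂⟩⟩ := hne
  obtain ⟨a, ha, ha₁, ha₂⟩ := ((h (min ε₁ ε₂) (lt_min hε₁ hε₂)).and (h₁.and h₂)).exists
  rcases (thickening_union _ D E).subset ha with ha | ha
  · exact ha₁ (thickening_mono (min_le_left _ _) D ha)
  · exact ha₂ (thickening_mono (min_le_right _ _) E ha)

theorem Approaches.exists_of_biUnion {ι : Type*} {𝓕 : Ultrafilter α} {s : Set ι} (hs : s.Finite)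
    {S : ι → Set P} (h : Approaches 𝓕 u (⋃ i ∈ s, S i)) : ∃ i ∈ s, Approaches 𝓕 u (S i) := by
  induction s, hs using Set.Finite.induction_on with
  | empty => exact (not_approaches_empty (by simpa using h)).elim
  | @insert i s _ _ ih =>
    rw [biUnion_insert] at h
    rcases h.union with h | h
    · exact ⟨i, mem_insert i s, h⟩
    · obtain ⟨j, hj, h⟩ := ih h
      exact ⟨j, mem_insert_of_mem i hj, h⟩

end Approaches

section Graph

variable {α X β : Type*} [PseudoMetricSpace X] [PseudoMetricSpace β] {f : X → β} {C D : Set X}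
  {l : Filter α} {x y : α → X}

theorem UniformContinuousOn.exists_dist_graph_lt (hf : UniformContinuousOn f C) {ε : ℝ}
    (hε : 0 < ε) : ∃ δ > 0, ∀ x, ∀ z ∈ C, ∀ w ∈ C,
      dist (x, f x) (z, f z) < δ → dist x w < δ → dist (x, f x) (w, f w) < ε := by
  obtain ⟨ω, hω, hfω⟩ := Metric.uniformContinuousOn_iff.1 hf (ε / 2) (half_pos hε)
  refine ⟨min (ε / 2) (ω / 2), by positivity, fun x z hz w hw hxz hxw => ?_⟩
  rw [Prod.dist_eq, max_lt_iff] at hxz ⊢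
  have hzw : dist z w < ω := by
    calc dist z w ≤ dist z x + dist x w := dist_triangle z x w
      _ < ω / 2 + ω / 2 := by rw [dist_comm]; gcongr <;> linarith [min_le_right (ε / 2) (ω / 2)]
      _ = ω := add_halves ω
  constructor
  · linarith [min_le_left (ε / 2) (ω / 2)]
  · calc dist (f x) (f w) ≤ dist (f x) (f z) + dist (f z) (f w) := dist_triangle _ _ _
      _ < ε / 2 + ε / 2 := by gcongr <;> linarith [min_le_left (ε / 2) (ω / 2), hfω z hz w hw hzw]
      _ = ε := add_halves ε


theorem Approaches.graphOn_of_inter (hf : UniformContinuousOn f C)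
    (hC : Approaches l (fun a => (x a, f (x a))) (C.graphOn f)) (hD : Approaches l x (C ∩ D)) :
    Approaches l (fun a => (x a, f (x a))) (D.graphOn f) := by
  intro ε hε
  obtain ⟨δ, hδ, hgraph⟩ := hf.exists_dist_graph_lt hε
  filter_upwards [hC δ hδ, hD δ hδ] with a hz hw
  obtain ⟨_, ⟨z, hz, rfl⟩, hxz⟩ := mem_thickening_iff.1 hz
  obtain ⟨w, ⟨hwC, hwD⟩, hxw⟩ := mem_thickening_iff.1 hw
  exact mem_thickening_iff.2 ⟨_, mem_image_of_mem _ hwD, hgraph (x a) z hz w hwC hxz hxw⟩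

theorem Approaches.eventually_dist_lt (hf : UniformContinuousOn f C)
    (hC : Approaches l (fun a => (x a, f (x a))) (C.graphOn f)) (hy : ∀ᶠ a in l, y a ∈ C)
    (hxy : ∀ δ > 0, ∀ᶠ a in l, dist (x a) (y a) < δ) {ε : ℝ} (hε : 0 < ε) :
    ∀ᶠ a in l, dist (f (x a)) (f (y a)) < ε := by
  obtain ⟨δ, hδ, hgraph⟩ := hf.exists_dist_graph_lt hε
  filter_upwards [hC δ hδ, hy, hxy δ hδ] with a hz hyC hxy
  obtain ⟨_, ⟨z, hz, rfl⟩, hxz⟩ := mem_thickening_iff.1 hz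
  exact (le_max_right _ _).trans_lt (hgraph (x a) z hz (y a) hyC hxz hxy)

end Graph

section UPlaced

variable {X : Type*} [PseudoMetricSpace X]

def UPlaced (A B : Set X) : Prop :=
  ∀ ε > 0, ∃ δ > 0, ∀ p ∈ A, ∀ q ∈ B, dist p q < δ → ∃ z ∈ A ∩ B, dist p z < ε

theorem UPlaced.approaches_inter {α : Type*} {l : Filter α} {x y : α → X} {A B : Set X}
    (h : UPlaced A B) (hx : ∀ᶠ a in l, x a ∈ A) (hy : ∀ᶠ a in l, y a ∈ B)
    (hxy : ∀ δ > 0, ∀ᶠ a in l, dist (x a) (y a) < δ) : Approaches l x (A ∩ B) := by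
  intro ε hε
  obtain ⟨δ, hδ, hz⟩ := h ε hε
  filter_upwards [hx, hy, hxy δ hδ] with a hxA hyB hd
  exact mem_thickening_iff.2 (hz _ hxA _ hyB hd)

theorem uniformContinuous_of_uPlaced {β ι : Type*} [PseudoMetricSpace β] [Finite ι]
    {C : ι → Set X} (hcov : ⋃ i, C i = univ)
    (hC : ∀ s : Set ι, UPlaced (⋃ i ∈ s, C i) (⋃ i ∈ sᶜ, C i)) {f : X → β}
    (hf : ∀ i, UniformContinuousOn f (C i)) : UniformContinuous f := by
  refine (tendsto_iff_ultrafilter _ _ _).2 fun 𝓕 h𝓕 => ?_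
  have hclose : ∀ δ > 0, ∀ᶠ p : X × X in 𝓕, dist p.1 p.2 < δ :=
    fun δ hδ => h𝓕 (dist_mem_uniformity hδ)
  have hpiece : ∀ v : X × X → X, ∃ i, ∀ᶠ p in 𝓕, v p ∈ C i := fun v =>
    Ultrafilter.eventually_exists_iff.1 (Eventually.of_forall fun p =>
      mem_iUnion.1 (hcov.symm ▸ mem_univ (v p)))
  let T := {i | Approaches 𝓕 (fun p : X × X => (p.1, f p.1)) ((C i).graphOn f)}
  obtain ⟨i, hi⟩ := hpiece Prod.fst
  obtain ⟨j, hj⟩ := hpiece Prod.snd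
  have hiT : i ∈ T := approaches_of_eventually_mem (hi.mono fun p hp => mem_image_of_mem _ hp)
  suffices hjT : j ∈ T from uniformity_basis_dist.tendsto_right_iff.2
    fun ε hε => hjT.eventually_dist_lt (hf j) hj hclose hε
  by_contra hjT
  have hbridge := (hC T).approaches_inter (hi.mono fun p hp => mem_biUnion hiT hp)
    (hj.mono fun p hp => mem_biUnion hjT hp) hclose
  rw [iUnion₂_inter] at hbridge
  obtain ⟨a, haT, ha⟩ := hbridge.exists_of_biUnion (toFinite T)
  have hout := Approaches.graphOn_of_inter (hf a) haT ha
  simp only [graphOn, image_iUnion₂] at hout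
  obtain ⟨b, hbT, hb⟩ := hout.exists_of_biUnion (toFinite Tᶜ)
  exact hbT hb

end UPlaced

namespace IsStraight

variable {X : Type*} [MetricSpace X] {A B : Set X}

theorem uniformContinuous_indicator_compl (hX : IsStraight X) (hA : IsClosed A)
    (hB : IsClosed B) (hAB : A ∪ B = univ) {h : X → ℝ} (hh : UniformContinuous h)
    (hzero : ∀ x ∈ A ∩ B, h x = 0) : UniformContinuous (Bᶜ.indicator h) := by
  have hOnA : EqOn h (Bᶜ.indicator h) A := fun x hx => by
    by_cases hxB : x ∈ B
    · rw [indicator_of_notMem (not_not_intro hxB), hzero x ⟨hx, hxB⟩]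
    · exact (indicator_of_mem hxB h).symm
  have hOnB : EqOn 0 (Bᶜ.indicator h) B := fun x hx =>
    (indicator_of_notMem (not_not_intro hx) h).symm
  refine hX A B hA hB hAB _ ?_ (hh.uniformContinuousOn.congr hOnA)
    (uniformContinuous_const.uniformContinuousOn.congr hOnB)
  rw [← continuousOn_univ, ← hAB]
  exact (hh.continuous.continuousOn.congr hOnA.symm).union_of_isClosed
    (continuousOn_const.congr hOnB.symm) hA hB

theorem uPlaced (hX : IsStraight X) (hA : IsClosed A) (hB : IsClosed B) (hAB : A ∪ B = univ) :
    UPlaced A B := by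
  intro ε hε
  rcases (A ∩ B).eq_empty_or_nonempty with hK | hK
  · obtain ⟨δ, hδ, hGδ⟩ := Metric.uniformContinuous_iff.1
      (hX.uniformContinuous_indicator_compl hA hB hAB (h := 1) uniformContinuous_const
        (by simp [hK])) 1 one_pos
    refine ⟨δ, hδ, fun p hp q hq hpq => absurd (hGδ hpq) ?_⟩
    have hpB : p ∉ B := fun hpB => hK.subset ⟨hp, hpB⟩
    simp [hpB, hq]
  · obtain ⟨δ, hδ, hGδ⟩ := Metric.uniformContinuous_iff.1
      (hX.uniformContinuous_indicator_compl hA hB hAB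
        (lipschitz_infDist_pt (A ∩ B)).uniformContinuous fun _ => infDist_zero_of_mem) ε hε
    refine ⟨δ, hδ, fun p hp q hq hpq => ?_⟩
    by_cases hpB : p ∈ B
    · exact ⟨p, ⟨hp, hpB⟩, by simpa using hε⟩
    have hG := hGδ hpq
    simp only [mem_compl_iff, hpB, hq, not_false_eq_true, not_true_eq_false, indicator_of_mem,
      indicator_of_notMem, dist_zero_right, Real.norm_eq_abs, abs_of_nonneg infDist_nonneg] at hG
    exact (infDist_lt_iff hK).1 hG

end IsStraight

theorem stmt15_general {X : Type*} [MetricSpace X] (hstraight : IsStraight X)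
    (n : ℕ) (C : Fin n → Set X) (hC : ∀ k, IsClosed (C k))
    (hcov : ⋃ k, C k = Set.univ) (f : X → ℝ) :
    UniformContinuous f ↔ ∀ k, UniformContinuousOn f (C k) := by
  refine ⟨fun h _ => h.uniformContinuousOn, uniformContinuous_of_uPlaced hcov fun s => ?_⟩
  refine hstraight.uPlaced (s.toFinite.isClosed_biUnion fun k _ => hC k)
    (sᶜ.toFinite.isClosed_biUnion fun k _ => hC k) ?_
  rw [← biUnion_union, union_compl_self, biUnion_univ, hcov]

/-- In a straight metric space covered by finitely many closed sets, a continuous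
real-valued function is uniformly continuous iff each of its restrictions to the
sets of the cover is uniformly continuous. -/
theorem stmt15 {X : Type*} [MetricSpace X] (hstraight : IsStraight X)
    (n : ℕ) (C : Fin n → Set X) (hC : ∀ k, IsClosed (C k))
    (hcov : ⋃ k, C k = Set.univ) (f : X → ℝ) (hf : Continuous f) :
    UniformContinuous f ↔ ∀ k, UniformContinuousOn f (C k) :=
  stmt15_general hstraight n C hC hcov f
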